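/- arXiv:1208.3554 — 3 statements merged into one kernel-verified Lean document; each statement's English description precedes it below -/
import Mathlib

section
/- Let G be a group and let K be a subgroup of G such that gKg⁻¹ is commensurate with K for all g ∈ G. Let N be a subgroup of K of finite index and let g ∈ G. Then there exists a subgroup M of N such that M is an intersection of finitely many conjugates of N (i.e., there is a finite subset S of G with M equal to the intersection over s ∈ S of sNs⁻¹), and such that for all h ∈ G, the set gN ∩ Nh is a union of left cosets of M (i.e., for every x ∈ gN ∩ Nh, the left coset xM is contained in gN ∩ Nh). -/
/-- The left coset `gN` of a subgroup `N`, as a set. -/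
def lCoset {G : Type*} [Group G] (g : G) (N : Subgroup G) : Set G :=
  (g * ·) '' (N : Set G)

/-- The right coset `Ng` of a subgroup `N`, as a set. -/
def rCoset {G : Type*} [Group G] (N : Subgroup G) (g : G) : Set G :=
  (· * g) '' (N : Set G)

/-!
For `x ∈ gN ∩ Nh`, the coset `xM` lies in `gN` as soon as `M ≤ N`, and in `Nh` as soon
as `M ≤ x⁻¹Nx`. Writing `x = gn` with `n ∈ N`, the conjugate `x⁻¹Nx = n⁻¹(g⁻¹Ng)n` only
depends on the coset of `n` modulo `g⁻¹Ng ∩ N`, which has finite index in `N` because `N`,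
being commensurable with `K`, has the same commensurator as `K`, namely all of `G`. So `M`
can be taken to be `N` intersected with finitely many of these conjugates.
-/

open scoped Pointwise

namespace Subgroup

variable {G : Type*} [Group G]

theorem commensurable_of_le {N K : Subgroup G} (hNK : N ≤ K) (hN : N.relIndex K ≠ 0) :
    Commensurable N K :=
  ⟨hN, by simp [relIndex_eq_one.mpr hNK]⟩

theorem commensurable_conj_of_commensurable {N K : Subgroup G}
    (hK : ∀ g : G, Commensurable (MulAut.conj g • K) K) (hNK : Commensurable N K) (g : G) :
    Commensurable (MulAut.conj g • N) N :=
  show g ∈ Commensurable.commensurator N from Commensurable.eq hNK ▸ hK g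

theorem exists_finset_conj_smul_eq {P N : Subgroup G} (hP : P.relIndex N ≠ 0) :
    ∃ T : Finset G, ∀ n ∈ N, ∃ t ∈ T, MulAut.conj t • P = MulAut.conj n • P := by
  classical
  have : Finite (N ⧸ P.subgroupOf N) := Nat.finite_of_card_ne_zero hP
  have := Fintype.ofFinite (N ⧸ P.subgroupOf N)
  refine ⟨Finset.univ.image fun q : N ⧸ P.subgroupOf N => (q.out : G), fun n hn => ?_⟩
  obtain ⟨d, hd⟩ := QuotientGroup.mk_out_eq_mul (P.subgroupOf N) ⟨n, hn⟩
  refine ⟨_, Finset.mem_image_of_mem _ (Finset.mem_univ (QuotientGroup.mk ⟨n, hn⟩)), ?_⟩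
  rw [hd, coe_mul, map_mul, mul_smul, conj_smul_eq_self_of_mem (mem_subgroupOf.mp d.2)]

theorem exists_finset_conj_smul_eq_of_mem_lCoset {N : Subgroup G} {g : G}
    (h : (MulAut.conj g⁻¹ • N).relIndex N ≠ 0) :
    ∃ S : Finset G, ∀ x ∈ lCoset g N, ∃ s ∈ S,
      MulAut.conj s • N = MulAut.conj x⁻¹ • N := by
  classical
  obtain ⟨T, hT⟩ := exists_finset_conj_smul_eq h
  refine ⟨T.image (· * g⁻¹), ?_⟩
  rintro _ ⟨n, hn, rfl⟩
  obtain ⟨t, ht, hconj⟩ := hT n⁻¹ (N.inv_mem hn)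
  refine ⟨t * g⁻¹, Finset.mem_image_of_mem _ ht, ?_⟩
  simpa [mul_smul] using hconj

end Subgroup

section Cosets

variable {G : Type*} [Group G] {M N : Subgroup G} {x : G}

theorem lCoset_subset_lCoset {g : G} (hx : x ∈ lCoset g N) (hMN : M ≤ N) :
    lCoset x M ⊆ lCoset g N := by
  obtain ⟨n, hn, rfl⟩ := hx
  rintro _ ⟨m, hm, rfl⟩
  exact ⟨n * m, N.mul_mem hn (hMN hm), (mul_assoc g n m).symm⟩

theorem lCoset_subset_rCoset {h : G} (hx : x ∈ rCoset N h) (hM : M ≤ MulAut.conj x⁻¹ • N) :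
    lCoset x M ⊆ rCoset N h := by
  rintro _ ⟨m, hm, rfl⟩
  have hxm : x * m * x⁻¹ ∈ N := by
    simpa [Subgroup.mem_pointwise_smul_iff_inv_smul_mem] using hM hm
  obtain ⟨n, hn, rfl⟩ := hx
  exact ⟨n * h * m * (n * h)⁻¹ * n, N.mul_mem hxm hn, by group⟩

end Cosets

/-- Let `G` be a group and `K` a subgroup such that `gKg⁻¹` is commensurate with `K` for
all `g ∈ G`.  Let `N` be a finite-index subgroup of `K` and let `g ∈ G`.  Then there is a
subgroup `M` of `N` which is an intersection of finitely many conjugates of `N`, such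
that for all `h ∈ G` the set `gN ∩ Nh` is a union of left cosets of `M`. -/
theorem exists_finite_conj_inter_union_of_left_cosets {G : Type*} [Group G]
    (K : Subgroup G)
    (hcomm : ∀ g : G, Subgroup.Commensurable (Subgroup.map (MulAut.conj g).toMonoidHom K) K)
    (N : Subgroup G) (hNK : N ≤ K) (hN : N.relIndex K ≠ 0) (g : G) :
    ∃ M : Subgroup G, M ≤ N ∧
      (∃ S : Finset G, M = ⨅ s ∈ S, Subgroup.map (MulAut.conj s).toMonoidHom N) ∧
      ∀ h : G, ∀ x ∈ lCoset g N ∩ rCoset N h,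
        lCoset x M ⊆ lCoset g N ∩ rCoset N h := by
  classical
  have hNN : Subgroup.Commensurable (MulAut.conj g⁻¹ • N) N :=
    Subgroup.commensurable_conj_of_commensurable hcomm (Subgroup.commensurable_of_le hNK hN) g⁻¹
  obtain ⟨S, hS⟩ := Subgroup.exists_finset_conj_smul_eq_of_mem_lCoset hNN.1
  set M := ⨅ s ∈ insert 1 S, MulAut.conj s • N
  have hMN : M ≤ N := iInf₂_le_of_le 1 (Finset.mem_insert_self 1 S) (by rw [map_one, one_smul])
  refine ⟨M, hMN, ⟨insert 1 S, rfl⟩, fun h x ⟨hxg, hxh⟩ => ?_⟩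
  obtain ⟨s, hs, hsx⟩ := hS x hxg
  have hMx : M ≤ MulAut.conj x⁻¹ • N := hsx ▸ iInf₂_le s (Finset.mem_insert_of_mem hs)
  exact Set.subset_inter (lCoset_subset_lCoset hxg hMN) (lCoset_subset_rCoset hxh hMx)
end

section
/- Let G be a group, let N be a subgroup of G, and let g ∈ G be such that N ∩ gNg⁻¹ has finite index in gNg⁻¹. Then the set of subsets {gN ∩ Nh : h ∈ G} of G is finite. -/
/-!
If `x ∈ gN ∩ Nh` then `Nh = Nx`, so `gN ∩ Nh = gN ∩ Ngn` with `n = g⁻¹x ∈ N`. For `k` in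
`K = g⁻¹Ng` we have `Ngkn = (gkg⁻¹)Ngn = Ngn`, so `gN ∩ Ngn` only depends on the right coset
`(K ∩ N)n` in `N`. Conjugating by `g` identifies the index of `K ∩ N` in `N` with that of
`N ∩ gNg⁻¹` in `gNg⁻¹`, hence besides `∅` there are only finitely many such sets.
-/

namespace Subgroup

variable {G : Type*} [Group G]

theorem finite_image_of_forall_mul_left_eq {X : Type*} {H L : Subgroup G} (hL : L.relIndex H ≠ 0)
    {f : G → X} (hf : ∀ k ∈ L, ∀ a, f (k * a) = f a) : (f '' H).Finite := by
  have : (L.subgroupOf H).FiniteIndex := ⟨hL⟩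
  refine (Set.finite_range fun q : H ⧸ L.subgroupOf H ↦ f (q.out : G)⁻¹).subset ?_
  rintro _ ⟨a, ha, rfl⟩
  obtain ⟨k, hk⟩ := QuotientGroup.mk_out_eq_mul (L.subgroupOf H) (⟨a, ha⟩ : H)⁻¹
  refine ⟨QuotientGroup.mk (⟨a, ha⟩ : H)⁻¹, ?_⟩
  simp only [hk, coe_mul, InvMemClass.coe_inv, mul_inv_rev, inv_inv]
  exact hf _ (inv_mem k.2) a

theorem image_mul_right_eq_of_mul_inv_mem (N : Subgroup G) {a b : G} (h : a * b⁻¹ ∈ N) :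
    (· * a) '' (N : Set G) = (· * b) '' N := by
  ext x
  simp only [Set.image_mul_right, Set.mem_preimage, SetLike.mem_coe]
  constructor
  · intro hx
    simpa [mul_assoc] using mul_mem hx h
  · intro hx
    simpa [mul_assoc] using mul_mem hx (inv_mem h)

end Subgroup

/-- Let `G` be a group, `N` a subgroup of `G`, and `g ∈ G` such that `N ∩ gNg⁻¹` has
finite index in `gNg⁻¹`.  Then the collection of subsets `{gN ∩ Nh : h ∈ G}` of `G`
is finite. -/
theorem finite_setOf_leftCoset_inter_rightCoset {G : Type*} [Group G] (N : Subgroup G)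
    (g : G) (hfi : N.relIndex (Subgroup.map (MulAut.conj g).toMonoidHom N) ≠ 0) :
    Set.Finite {s : Set G | ∃ h : G,
      s = ((g * ·) '' (N : Set G)) ∩ ((· * h) '' (N : Set G))} := by
  set S : G → Set G := fun h ↦ (g * ·) '' (N : Set G) ∩ (· * h) '' N
  set K := N.comap (MulAut.conj g).toMonoidHom
  have hK : K.relIndex N ≠ 0 := by rwa [Subgroup.relIndex_comap]
  have hS_mul_left : ∀ k ∈ K, ∀ a, S (g * (k * a)) = S (g * a) := by
    intro k hk a
    refine congrArg (_ ∩ ·) (N.image_mul_right_eq_of_mul_inv_mem ?_)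
    simpa [K, mul_assoc] using hk
  refine ((Subgroup.finite_image_of_forall_mul_left_eq (f := fun a ↦ S (g * a)) hK
    hS_mul_left).insert ∅).subset ?_
  rintro _ ⟨h, rfl⟩
  rcases (S h).eq_empty_or_nonempty with hS | ⟨x, hxg, hxh⟩
  · exact Or.inl hS
  rw [Set.image_mul_left] at hxg
  rw [Set.image_mul_right] at hxh
  refine Or.inr ⟨g⁻¹ * x, hxg, ?_⟩
  show S (g * (g⁻¹ * x)) = S h
  rw [mul_inv_cancel_left]
  exact congrArg (_ ∩ ·) (N.image_mul_right_eq_of_mul_inv_mem hxh)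
end

section
/- Let G be a group, let R be a totally disconnected, locally compact Hausdorff topological group, let φ : G → R be a group homomorphism, let U be a compact open subgroup of R, and set K = φ⁻¹(U). Then K ∩ gKg⁻¹ has finite index in K for every g ∈ G. -/
/-!
Conjugating `K = φ⁻¹(U)` by `g` gives the preimage of the conjugate `φ(g) U φ(g)⁻¹`, which is
an open subgroup of `R`; an open subgroup has finite index in the compact group `U`, and finite
relative index survives pulling back along `φ`.
-/

namespace Subgroup

variable {G R : Type*} [Group G] [Group R]

theorem map_conj_comap (φ : G →* R) (U : Subgroup R) (g : G) :
    (U.comap φ).map (MulAut.conj g).toMonoidHom =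
      (U.map (MulAut.conj (φ g)).toMonoidHom).comap φ := by
  ext x
  simp only [mem_map_equiv, mem_comap, MulAut.conj_symm_apply, map_mul, map_inv]

variable [TopologicalSpace R]

theorem isOpen_map_conj [ContinuousMul R] {U : Subgroup R} (hU : IsOpen (U : Set R)) (r : R) :
    IsOpen (U.map (MulAut.conj r).toMonoidHom : Set R) := by
  rw [map_equiv_eq_comap_symm']
  exact hU.preimage (by fun_prop : Continuous fun x => r⁻¹ * x * r)

theorem relIndex_ne_zero_of_isOpen_of_isCompact [IsTopologicalGroup R] {A U : Subgroup R}
    (hA : IsOpen (A : Set R)) (hU : IsCompact (U : Set R)) : A.relIndex U ≠ 0 := by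
  have : CompactSpace U := isCompact_iff_compactSpace.mp hU
  have : Finite (U ⧸ A.subgroupOf U) :=
    quotient_finite_of_isOpen _ (hA.preimage continuous_subtype_val)
  exact index_ne_zero_of_finite

end Subgroup

theorem relindex_conj_comap_ne_zero_general {G R : Type*} [Group G] [Group R]
    [TopologicalSpace R] [IsTopologicalGroup R] (φ : G →* R) (U : Subgroup R)
    (hUc : IsCompact (U : Set R)) (hUo : IsOpen (U : Set R)) :
    ∀ g : G,
      (Subgroup.map (MulAut.conj g).toMonoidHom (U.comap φ)).relIndex (U.comap φ) ≠ 0 := by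
  intro g
  rw [Subgroup.map_conj_comap]
  exact Subgroup.relIndex_comap_ne_zero φ
    (Subgroup.relIndex_ne_zero_of_isOpen_of_isCompact (Subgroup.isOpen_map_conj hUo (φ g)) hUc)

/-- Let `G` be a group, `R` a totally disconnected locally compact Hausdorff topological
group, `φ : G → R` a homomorphism, `U` a compact open subgroup of `R` and
`K = φ⁻¹(U)`.  Then `K ∩ gKg⁻¹` has finite index in `K` for every `g ∈ G`. -/
theorem relindex_conj_comap_ne_zero {G R : Type*} [Group G] [Group R]
    [TopologicalSpace R] [IsTopologicalGroup R] [T2Space R] [TotallyDisconnectedSpace R]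
    [LocallyCompactSpace R] (φ : G →* R) (U : Subgroup R)
    (hUc : IsCompact (U : Set R)) (hUo : IsOpen (U : Set R)) :
    ∀ g : G,
      (Subgroup.map (MulAut.conj g).toMonoidHom (U.comap φ)).relIndex (U.comap φ) ≠ 0 :=
  relindex_conj_comap_ne_zero_general φ U hUc hUo
end
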